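/- Let C be a coassociative counital coalgebra over a field k. Then any Artinian left C-comodule is co-Noetherian. -/
import Mathlib


open TensorProduct LinearMap

section Core

variable (k : Type) [Field k]
variable (C : Type) [AddCommGroup C] [Module k C] [Coalgebra k C]

/-- Axioms for a left `C`-comodule structure given by a coaction map `ρ`. -/
structure IsComod {M : Type} [AddCommGroup M] [Module k M]
    (ρ : M →ₗ[k] C ⊗[k] M) : Prop where
  coassoc : ∀ m : M, (TensorProduct.assoc k C C M)
      ((CoalgebraStruct.comul (R := k) (A := C)).rTensor M (ρ m)) = ρ.lTensor C (ρ m)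
  counit : ∀ m : M, (TensorProduct.lid k M)
      ((CoalgebraStruct.counit (R := k) (A := C)).rTensor M (ρ m)) = m

/-- A `k`-linear map between comodules is a comodule morphism. -/
def IsComodHom {M N : Type} [AddCommGroup M] [Module k M] [AddCommGroup N] [Module k N]
    (ρM : M →ₗ[k] C ⊗[k] M) (ρN : N →ₗ[k] C ⊗[k] N) (f : M →ₗ[k] N) : Prop :=
  f.lTensor C ∘ₗ ρM = ρN ∘ₗ f

/-- The coaction of the cofree left comodule `C ⊗ V`. -/
noncomputable def cofreeCoaction (V : Type) [AddCommGroup V] [Module k V] :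
    C ⊗[k] V →ₗ[k] C ⊗[k] (C ⊗[k] V) :=
  (TensorProduct.assoc k C C V).toLinearMap ∘ₗ
    (CoalgebraStruct.comul (R := k) (A := C)).rTensor V

/-- A left comodule is finitely cogenerated if it admits an injective comodule
morphism into a cofree comodule with finite-dimensional space of cogenerators. -/
def FinCogen {M : Type} [AddCommGroup M] [Module k M]
    (ρ : M →ₗ[k] C ⊗[k] M) : Prop :=
  ∃ (V : Type) (_ : AddCommGroup V) (_ : Module k V), FiniteDimensional k V ∧
    ∃ f : M →ₗ[k] C ⊗[k] V, Function.Injective f ∧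
      IsComodHom k C ρ (cofreeCoaction k C V) f

end Core

section SubQuot

variable (k : Type) [Field k]
variable (C : Type) [AddCommGroup C] [Module k C] [Coalgebra k C]
variable {M : Type} [AddCommGroup M] [Module k M]

/-- A subspace `N ⊆ M` is a subcomodule if the coaction takes it into the image of
`C ⊗ N` in `C ⊗ M`. -/
def IsSubcomod (ρ : M →ₗ[k] C ⊗[k] M) (N : Submodule k M) : Prop :=
  ∀ m ∈ N, ρ m ∈ LinearMap.range (N.subtype.lTensor C)

/-- The quotient comodule `M/N` is finitely cogenerated; equivalently, there is a
morphism of comodules from `M` to a cofree comodule with a finite-dimensional space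
of cogenerators whose kernel is exactly `N`. -/
def QuotFinCogen (ρ : M →ₗ[k] C ⊗[k] M) (N : Submodule k M) : Prop :=
  ∃ (V : Type) (_ : AddCommGroup V) (_ : Module k V), FiniteDimensional k V ∧
    ∃ g : M →ₗ[k] C ⊗[k] V, IsComodHom k C ρ (cofreeCoaction k C V) g ∧
      LinearMap.ker g = N

/-- A comodule is co-Noetherian if all its quotient comodules are finitely
cogenerated. -/
def CoNoetherianComod (ρ : M →ₗ[k] C ⊗[k] M) : Prop :=
  ∀ N : Submodule k M, IsSubcomod k C ρ N → QuotFinCogen k C ρ N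

/-- A comodule is Artinian if every descending chain of its subcomodules
terminates. -/
def ArtinianComod (ρ : M →ₗ[k] C ⊗[k] M) : Prop :=
  ∀ f : ℕ → Submodule k M, (∀ n, IsSubcomod k C ρ (f n)) →
    (∀ n, f (n + 1) ≤ f n) → ∃ n, ∀ m, n ≤ m → f m = f n

end SubQuot


set_option linter.unusedSectionVars false

section Aux

variable {k : Type} [Field k]
variable {C : Type} [AddCommGroup C] [Module k C] [Coalgebra k C]
variable {M : Type} [AddCommGroup M] [Module k M]

/-- The comodule map `M → C ⊗ (M ⧸ U)` induced by the coaction. -/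
noncomputable def gmap (ρ : M →ₗ[k] C ⊗[k] M) (U : Submodule k M) :
    M →ₗ[k] C ⊗[k] (M ⧸ U) :=
  (U.mkQ.lTensor C) ∘ₗ ρ

lemma aux_assoc_nat {N : Type} [AddCommGroup N] [Module k N] (f : M →ₗ[k] N)
    (t : C ⊗[k] M) :
    (f.lTensor C).lTensor C ((TensorProduct.assoc k C C M)
        ((CoalgebraStruct.comul (R := k) (A := C)).rTensor M t))
      = (TensorProduct.assoc k C C N)
        ((CoalgebraStruct.comul (R := k) (A := C)).rTensor N (f.lTensor C t)) := by
  induction t using TensorProduct.induction_on with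
  | zero => simp
  | tmul c m =>
    simp only [rTensor_tmul, lTensor_tmul]
    induction (CoalgebraStruct.comul (R := k) (A := C) c) using TensorProduct.induction_on with
    | zero => simp
    | tmul a b => simp
    | add x y hx hy =>
      simp only [TensorProduct.add_tmul, map_add, hx, hy]
  | add x y hx hy => simp only [map_add, hx, hy]

lemma gmap_isComodHom {ρ : M →ₗ[k] C ⊗[k] M} (hM : IsComod k C ρ) (U : Submodule k M) :
    IsComodHom k C ρ (cofreeCoaction k C (M ⧸ U)) (gmap ρ U) := by
  unfold IsComodHom
  apply LinearMap.ext
  intro m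
  simp only [LinearMap.comp_apply, gmap, cofreeCoaction, LinearMap.lTensor_comp,
    LinearEquiv.coe_coe]
  rw [← hM.coassoc m]
  exact aux_assoc_nat U.mkQ (ρ m)

lemma aux_counit_nat {P : Type} [AddCommGroup P] [Module k P] (f : P →ₗ[k] M)
    (x : C ⊗[k] P) :
    (TensorProduct.lid k M) ((CoalgebraStruct.counit (R := k) (A := C)).rTensor M
        (f.lTensor C x))
      = f ((TensorProduct.lid k P)
          ((CoalgebraStruct.counit (R := k) (A := C)).rTensor P x)) := by
  induction x using TensorProduct.induction_on with
  | zero => simp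
  | tmul c p => simp
  | add x y hx hy => simp only [map_add, hx, hy]

/-- Kernel of `g_U` is contained in `U` (uses the counit axiom). -/
lemma ker_gmap_le {ρ : M →ₗ[k] C ⊗[k] M} (hM : IsComod k C ρ) (U : Submodule k M) :
    LinearMap.ker (gmap ρ U) ≤ U := by
  intro m hm
  have h0 : (U.mkQ.lTensor C) (ρ m) = 0 := hm
  have hmem : ρ m ∈ LinearMap.range (U.subtype.lTensor C) := by
    rw [← lTensor_mkQ C U]; exact h0
  obtain ⟨x, hx⟩ := hmem
  have := hM.counit m
  rw [← hx, aux_counit_nat U.subtype x] at this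
  rw [← this]
  exact ((TensorProduct.lid k U) ((CoalgebraStruct.counit (R := k) (A := C)).rTensor U x)).2

/-- Membership in terms of the range of `C ⊗ U`. -/
lemma mem_ker_gmap_iff {ρ : M →ₗ[k] C ⊗[k] M} (U : Submodule k M) (m : M) :
    m ∈ LinearMap.ker (gmap ρ U) ↔ ρ m ∈ LinearMap.range (U.subtype.lTensor C) := by
  rw [← lTensor_mkQ C U]
  exact Iff.rfl

lemma range_lTensor_mono {U U' : Submodule k M} (h : U ≤ U') :
    LinearMap.range (U.subtype.lTensor C) ≤ LinearMap.range (U'.subtype.lTensor C) := by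
  have : U.subtype = U'.subtype ∘ₗ Submodule.inclusion h := rfl
  rw [this, LinearMap.lTensor_comp]
  exact LinearMap.range_comp_le_range _ _

lemma ker_gmap_mono {ρ : M →ₗ[k] C ⊗[k] M} {U U' : Submodule k M} (h : U ≤ U') :
    LinearMap.ker (gmap ρ U) ≤ LinearMap.ker (gmap ρ U') := by
  intro m hm
  rw [mem_ker_gmap_iff] at hm ⊢
  exact range_lTensor_mono h hm

lemma subcomod_le_ker_gmap {ρ : M →ₗ[k] C ⊗[k] M} {N U : Submodule k M}
    (hN : IsSubcomod k C ρ N) (h : N ≤ U) : N ≤ LinearMap.ker (gmap ρ U) := by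
  intro m hm
  rw [mem_ker_gmap_iff]
  exact range_lTensor_mono h (hN m hm)

/-- `ker g_U` is a subcomodule (uses coassociativity, via the comodule-map
property of `g_U`, and flatness of `C`). -/
lemma ker_gmap_subcomod {ρ : M →ₗ[k] C ⊗[k] M} (hM : IsComod k C ρ) (U : Submodule k M) :
    IsSubcomod k C ρ (LinearMap.ker (gmap ρ U)) := by
  intro m hm
  have hexact : Function.Exact
      ((LinearMap.ker (gmap ρ U)).subtype.lTensor C) ((gmap ρ U).lTensor C) :=
    Module.Flat.lTensor_exact C (LinearMap.exact_subtype_ker_map (gmap ρ U))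
  have h0 : ((gmap ρ U).lTensor C) (ρ m) = 0 := by
    have hc := gmap_isComodHom hM U
    have := congrArg (fun f : M →ₗ[k] C ⊗[k] (C ⊗[k] (M ⧸ U)) => f m) hc
    simp only [LinearMap.comp_apply] at this
    rw [this, show gmap ρ U m = 0 from hm, map_zero]
  rw [LinearMap.exact_iff] at hexact
  have : ρ m ∈ LinearMap.ker ((gmap ρ U).lTensor C) := h0
  rwa [hexact] at this

/-- Separation by a cofinite subspace. -/
lemma exists_cofinite_sep (N : Submodule k M) (m : M) (hm : m ∉ N) :
    ∃ U : Submodule k M, N ≤ U ∧ m ∉ U ∧ FiniteDimensional k (M ⧸ U) := by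
  have hv : N.mkQ m ≠ 0 := by
    simpa [Submodule.Quotient.mk_eq_zero] using hm
  obtain ⟨φ, hφ⟩ : ∃ φ : Module.Dual k (M ⧸ N), φ (N.mkQ m) ≠ 0 := by
    by_contra h
    push_neg at h
    exact hv ((Module.forall_dual_apply_eq_zero_iff k _).mp h)
  set ψ : M →ₗ[k] k := φ ∘ₗ N.mkQ with hψ
  refine ⟨LinearMap.ker ψ, ?_, ?_, ?_⟩
  · intro x hx
    simp [ψ, LinearMap.mem_ker, Submodule.Quotient.mk_eq_zero,
      (Submodule.Quotient.mk_eq_zero N).mpr hx]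
  · simpa [ψ, LinearMap.mem_ker] using hφ
  · have : FiniteDimensional k (LinearMap.range ψ) := inferInstance
    exact (ψ.quotKerEquivRange).symm.finiteDimensional

lemma findim_quot_inf (U U' : Submodule k M) [FiniteDimensional k (M ⧸ U)]
    [FiniteDimensional k (M ⧸ U')] : FiniteDimensional k (M ⧸ (U ⊓ U')) := by
  have hker : LinearMap.ker (U.mkQ.prod U'.mkQ) ≤ U ⊓ U' := by
    intro x hx
    rw [LinearMap.mem_ker, LinearMap.prod_apply, Prod.mk_eq_zero] at hx
    exact ⟨(Submodule.Quotient.mk_eq_zero U).mp hx.1,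
      (Submodule.Quotient.mk_eq_zero U').mp hx.2⟩
  have hle : U ⊓ U' ≤ LinearMap.ker (U.mkQ.prod U'.mkQ) := by
    intro x hx
    rw [LinearMap.mem_ker, LinearMap.prod_apply, Prod.mk_eq_zero]
    exact ⟨(Submodule.Quotient.mk_eq_zero U).mpr hx.1,
      (Submodule.Quotient.mk_eq_zero U').mpr hx.2⟩
  refine FiniteDimensional.of_injective
    ((U ⊓ U').liftQ (U.mkQ.prod U'.mkQ) hle) ?_
  rw [← LinearMap.ker_eq_bot]
  exact Submodule.ker_liftQ_eq_bot _ _ _ hker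

/-- Existence of a minimal element in a nonempty family of subcomodules,
from the Artinian hypothesis. -/
lemma exists_minimal {ρ : M →ₗ[k] C ⊗[k] M} (hart : ArtinianComod k C ρ)
    (S : Set (Submodule k M)) (hS : S.Nonempty)
    (hsub : ∀ K ∈ S, IsSubcomod k C ρ K) :
    ∃ K ∈ S, ∀ K' ∈ S, ¬ K' < K := by
  by_contra h
  push_neg at h
  have hstep : ∀ K : {K // K ∈ S}, ∃ K' : {K // K ∈ S}, K'.1 < K.1 := by
    rintro ⟨K, hK⟩
    obtain ⟨K', hK', hlt⟩ := h K hK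
    exact ⟨⟨K', hK'⟩, hlt⟩
  set step : {K // K ∈ S} → {K // K ∈ S} := fun K => (hstep K).choose with hstepdef
  have hstep_lt : ∀ K, (step K).1 < K.1 := fun K => (hstep K).choose_spec
  set F : ℕ → {K // K ∈ S} := fun n => step^[n] ⟨hS.choose, hS.choose_spec⟩ with hF
  have hFsucc : ∀ n, F (n + 1) = step (F n) := by
    intro n
    simp [hF, Function.iterate_succ_apply']
  obtain ⟨n, hn⟩ := hart (fun n => (F n).1) (fun n => hsub _ (F n).2)
    (fun n => by show (F (n+1)).1 ≤ (F n).1; rw [hFsucc]; exact (hstep_lt (F n)).le)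
  have h1 : (F (n + 1)).1 = (F n).1 := hn (n + 1) (Nat.le_succ n)
  have h2 : (F (n + 1)).1 < (F n).1 := by rw [hFsucc]; exact hstep_lt (F n)
  rw [h1] at h2
  exact lt_irrefl _ h2

end Aux

/-- Lemma 1.4(a): any Artinian left `C`-comodule is co-Noetherian. -/
theorem artinian_comodule_coNoetherian
    (k : Type) [Field k]
    (C : Type) [AddCommGroup C] [Module k C] [Coalgebra k C]
    (M : Type) [AddCommGroup M] [Module k M]
    (ρ : M →ₗ[k] C ⊗[k] M) (hM : IsComod k C ρ)
    (hart : ArtinianComod k C ρ) :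
    CoNoetherianComod k C ρ := by
  intro N hN
  classical
  set S : Set (Submodule k M) :=
    {K | ∃ U : Submodule k M, N ≤ U ∧ FiniteDimensional k (M ⧸ U) ∧
      K = LinearMap.ker (gmap ρ U)} with hSdef
  have hStop : LinearMap.ker (gmap ρ (⊤ : Submodule k M)) ∈ S := by
    refine ⟨⊤, le_top, ?_, rfl⟩
    have : Subsingleton (M ⧸ (⊤ : Submodule k M)) :=
      Submodule.Quotient.subsingleton_iff.mpr rfl
    exact Module.Finite.of_surjective (0 : k →ₗ[k] M ⧸ (⊤ : Submodule k M))
      (fun x => ⟨0, Subsingleton.elim _ _⟩)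
  have hsub : ∀ K ∈ S, IsSubcomod k C ρ K := by
    rintro K ⟨U, -, -, rfl⟩
    exact ker_gmap_subcomod hM U
  obtain ⟨K, hKS, hKmin⟩ := exists_minimal hart S ⟨_, hStop⟩ hsub
  obtain ⟨U, hNU, hUfd, rfl⟩ := hKS
  have hker : LinearMap.ker (gmap ρ U) = N := by
    apply le_antisymm
    · intro m hm
      by_contra hmN
      obtain ⟨U', hNU', hmU', hU'fd⟩ := exists_cofinite_sep N m hmN
      have hfd : FiniteDimensional k (M ⧸ (U ⊓ U')) := findim_quot_inf U U'
      have hmem : LinearMap.ker (gmap ρ (U ⊓ U')) ∈ S :=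
        ⟨U ⊓ U', le_inf hNU hNU', hfd, rfl⟩
      refine hKmin _ hmem (lt_of_le_of_ne (ker_gmap_mono inf_le_left) ?_)
      intro heq
      have hm' : m ∈ LinearMap.ker (gmap ρ (U ⊓ U')) := heq ▸ hm
      exact hmU' ((inf_le_right : U ⊓ U' ≤ U') (ker_gmap_le hM (U ⊓ U') hm'))
    · exact subcomod_le_ker_gmap hN hNU
  exact ⟨M ⧸ U, inferInstance, inferInstance, hUfd, gmap ρ U, gmap_isComodHom hM U, hker⟩
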